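/- For all a, b in the Radford Hopf algebra R = R_{mn}(q), the functional β satisfies β(ab) = ε(a)β(b) + β(a)·α^{m}(b), where α^{m} denotes the m-th convolution power of α (explicitly, α^{m}(g^i x^j) = δ_{j,0} q^{i}). -/

import Mathlib

open scoped TensorProduct

/-- The convolution product on the dual `R* = Hom_K(R, K)` of a coalgebra:
`(f * h)(a) = Σ f(a₍₁₎) h(a₍₂₎)`. -/
noncomputable def conv (K : Type*) {R : Type*} [CommRing K] [AddCommMonoid R]
    [Module K R] [Coalgebra K R] (f h : R →ₗ[K] K) : R →ₗ[K] K :=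
  LinearMap.mul' K K ∘ₗ TensorProduct.map f h ∘ₗ Coalgebra.comul

/-- Convolution powers in `R*`; the zeroth power is the unit `ε` of `R*`. -/
noncomputable def convPow (K : Type*) {R : Type*} [CommRing K] [AddCommMonoid R]
    [Module K R] [Coalgebra K R] (f : R →ₗ[K] K) : ℕ → (R →ₗ[K] K)
  | 0 => Coalgebra.counit
  | j + 1 => conv K f (convPow K f j)

/-- for all `a, b` in the Radford Hopf algebra `R = R_{mn}(q)`, the
functional `β = Σ_i overline{g^i x}` satisfies
`β(ab) = ε(a)β(b) + β(a)·α^m(b)`, where `α^m` is the `m`-th convolution power of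
`α = Σ_i ξ^i overline{g^i}`. -/
theorem radford_beta_skew_primitive (K : Type*) [Field K] [IsAlgClosed K]
    (m n : ℕ) (hm : 2 ≤ m) (hn : 1 ≤ n) (hchar : ¬ (ringChar K ∣ m * n))
    (q : K) (hq : IsPrimitiveRoot q n)
    (ξ : K) (hξ : IsPrimitiveRoot ξ (m * n)) (hξm : ξ ^ m = q)
    (R : Type*) [Ring R] [HopfAlgebra K R] (g x : R)
    (hgo : g ^ (m * n) = 1) (hxn : x ^ n = g ^ n - 1) (hxg : x * g = q • (g * x))
    (B : Module.Basis (Fin (m * n) × Fin n) K R)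
    (hB : ∀ p : Fin (m * n) × Fin n, B p = g ^ (p.1 : ℕ) * x ^ (p.2 : ℕ))
    (hcg : Coalgebra.comul (R := K) g = g ⊗ₜ[K] g)
    (hcx : Coalgebra.comul (R := K) x = x ⊗ₜ[K] g + 1 ⊗ₜ[K] x)
    (heg : Coalgebra.counit (R := K) g = (1 : K))
    (hex : Coalgebra.counit (R := K) x = (0 : K))
    (α β : R →ₗ[K] K)
    (hα : ∀ (i : Fin (m * n)) (j : Fin n),
      α (g ^ (i : ℕ) * x ^ (j : ℕ)) = if (j : ℕ) = 0 then ξ ^ (i : ℕ) else 0)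
    (hβ : ∀ (i : Fin (m * n)) (j : Fin n),
      β (g ^ (i : ℕ) * x ^ (j : ℕ)) = if (j : ℕ) = 1 then 1 else 0) :
    ∀ a b : R, β (a * b) =
      Coalgebra.counit (R := K) a * β b + β a * convPow K α m b := by
  classical
  have hmn : 0 < m * n := Nat.mul_pos (lt_of_lt_of_le two_pos hm) hn
  have hn0 : 0 < n := hn
  -- reduction of powers
  have hgpow : ∀ a : ℕ, g ^ a = g ^ (a % (m * n)) := by
    intro a
    conv_lhs => rw [← Nat.div_add_mod a (m * n)]
    rw [pow_add, pow_mul, hgo, one_pow, one_mul]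
  have hξpow : ∀ a : ℕ, ξ ^ a = ξ ^ (a % (m * n)) := by
    intro a
    conv_lhs => rw [← Nat.div_add_mod a (m * n)]
    rw [pow_add, pow_mul, hξ.pow_eq_one, one_pow, one_mul]
  have hβ' : ∀ a b : ℕ, b < n → β (g ^ a * x ^ b) = if b = 1 then 1 else 0 := by
    intro a b hb
    rw [hgpow a]
    exact hβ ⟨a % (m * n), Nat.mod_lt _ hmn⟩ ⟨b, hb⟩
  have hα' : ∀ a b : ℕ, b < n → α (g ^ a * x ^ b) = if b = 0 then ξ ^ a else 0 := by
    intro a b hb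
    rw [hgpow a, hξpow a]
    exact hα ⟨a % (m * n), Nat.mod_lt _ hmn⟩ ⟨b, hb⟩
  have hαg : ∀ a : ℕ, α (g ^ a) = ξ ^ a := by
    intro a
    have := hα' a 0 hn0
    simpa using this
  -- counit values
  have hεg : ∀ a : ℕ, Coalgebra.counit (R := K) (g ^ a) = 1 := by
    intro a
    induction a with
    | zero => simp
    | succ a ih => rw [pow_succ, Bialgebra.counit_mul, ih, heg, one_mul]
  have hε' : ∀ a b : ℕ, Coalgebra.counit (R := K) (g ^ a * x ^ b) = if b = 0 then 1 else 0 := by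
    intro a b
    rw [Bialgebra.counit_mul, hεg, one_mul]
    rcases Nat.eq_zero_or_pos b with h | h
    · simp [h]
    · obtain ⟨c, rfl⟩ := Nat.exists_eq_add_of_lt h
      rw [if_neg (by omega), pow_succ, zero_add, Bialgebra.counit_mul, hex, mul_zero]
  -- commutation relations
  have hxgk : ∀ k : ℕ, x * g ^ k = (q ^ k) • (g ^ k * x) := by
    intro k
    induction k with
    | zero => simp
    | succ k ih =>
      rw [pow_succ, ← mul_assoc, ih, smul_mul_assoc, mul_assoc, hxg, mul_smul_comm,
        smul_smul, ← mul_assoc]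
      rw [← pow_succ, ← pow_succ]
  have hxjgk : ∀ j k : ℕ, x ^ j * g ^ k = (q ^ (j * k)) • (g ^ k * x ^ j) := by
    intro j k
    induction j with
    | zero => simp
    | succ j ih =>
      rw [pow_succ, mul_assoc, hxgk, mul_smul_comm, ← mul_assoc, ih, smul_mul_assoc,
        smul_smul, mul_assoc, ← pow_succ, ← pow_add]
      congr 2
      ring
  have hprod : ∀ i j k l : ℕ,
      (g ^ i * x ^ j) * (g ^ k * x ^ l) = (q ^ (j * k)) • (g ^ (i + k) * x ^ (j + l)) := by
    intro i j k l
    rw [mul_assoc, ← mul_assoc (x ^ j), hxjgk, smul_mul_assoc, mul_smul_comm]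
    congr 1
    simp [pow_add, mul_assoc]
  -- β on large x-powers
  have hβ'' : ∀ a c : ℕ, n ≤ c → c < 2 * n → β (g ^ a * x ^ c) = 0 := by
    intro a c h1 h2
    obtain ⟨d, rfl⟩ : ∃ d, c = n + d := ⟨c - n, by omega⟩
    have hd : d < n := by omega
    rw [pow_add, ← mul_assoc, hxn, mul_sub, mul_one, sub_mul, map_sub, ← pow_add,
      hβ' _ _ hd, hβ' _ _ hd, sub_self]
  -- comul on powers of g
  have hcg' : ∀ a : ℕ, Coalgebra.comul (R := K) (g ^ a) = (g ^ a) ⊗ₜ[K] (g ^ a) := by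
    intro a
    induction a with
    | zero => simp [Algebra.TensorProduct.one_def]
    | succ a ih =>
      rw [pow_succ, Bialgebra.comul_mul, ih, hcg, Algebra.TensorProduct.tmul_mul_tmul,
        ← pow_succ]
  -- the filtration submodules
  set W : ℕ → Submodule K (R ⊗[K] R) := fun j =>
    Submodule.span K {t | ∃ (a b : ℕ) (r : R), 1 ≤ b ∧ b ≤ j ∧ t = (g ^ a * x ^ b) ⊗ₜ[K] r}
    with hW
  have hWmul : ∀ j (w : R ⊗[K] R), w ∈ W j →
      w * (x ⊗ₜ[K] g + (1 : R) ⊗ₜ[K] x) ∈ W (j + 1) := by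
    intro j w hw
    induction hw using Submodule.span_induction with
    | mem t ht =>
      obtain ⟨a, b, r, h1, h2, rfl⟩ := ht
      rw [mul_add, Algebra.TensorProduct.tmul_mul_tmul, Algebra.TensorProduct.tmul_mul_tmul,
        mul_one, mul_assoc, ← pow_succ]
      exact Submodule.add_mem _
        (Submodule.subset_span ⟨a, b + 1, r * g, by omega, by omega, rfl⟩)
        (Submodule.subset_span ⟨a, b, r * x, h1, by omega, rfl⟩)
    | zero => rw [zero_mul]; exact Submodule.zero_mem _
    | add u v _ _ hu hv => rw [add_mul]; exact Submodule.add_mem _ hu hv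
    | smul c u _ hu => rw [smul_mul_assoc]; exact Submodule.smul_mem _ _ hu
  -- comul of basis elements modulo W
  have hcomA : ∀ j i : ℕ,
      Coalgebra.comul (R := K) (g ^ i * x ^ j) - (g ^ i) ⊗ₜ[K] (g ^ i * x ^ j) ∈ W j := by
    intro j
    induction j with
    | zero =>
      intro i
      simp only [pow_zero, mul_one, hcg' i, sub_self]
      exact Submodule.zero_mem _
    | succ j ih =>
      intro i
      have key : Coalgebra.comul (R := K) (g ^ i * x ^ (j + 1))
            - (g ^ i) ⊗ₜ[K] (g ^ i * x ^ (j + 1))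
          = (g ^ i * x) ⊗ₜ[K] (g ^ i * x ^ j * g)
            + (Coalgebra.comul (R := K) (g ^ i * x ^ j) - (g ^ i) ⊗ₜ[K] (g ^ i * x ^ j))
              * (x ⊗ₜ[K] g + (1 : R) ⊗ₜ[K] x) := by
        have e1 : g ^ i * x ^ (j + 1) = g ^ i * x ^ j * x := by
          rw [mul_assoc, ← pow_succ]
        rw [e1, Bialgebra.comul_mul, hcx, sub_mul,
          mul_add ((g ^ i) ⊗ₜ[K] (g ^ i * x ^ j)), Algebra.TensorProduct.tmul_mul_tmul,
          Algebra.TensorProduct.tmul_mul_tmul, mul_one]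
        abel
      rw [key]
      exact Submodule.add_mem _
        (Submodule.subset_span ⟨i, 1, g ^ i * x ^ j * g, le_rfl, by omega, by rw [pow_one]⟩)
        (hWmul j _ (ih i))
  -- α kills W j for j < n
  have hαkill : ∀ j, j < n → ∀ (h : R →ₗ[K] K) (w : R ⊗[K] R), w ∈ W j →
      LinearMap.mul' K K (TensorProduct.map α h w) = 0 := by
    intro j hj h w hw
    induction hw using Submodule.span_induction with
    | mem t ht =>
      obtain ⟨a, b, r, h1, h2, rfl⟩ := ht
      rw [TensorProduct.map_tmul, LinearMap.mul'_apply, hα' a b (by omega),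
        if_neg (by omega), zero_mul]
    | zero => simp
    | add u v _ _ hu hv => rw [map_add, map_add, hu, hv, add_zero]
    | smul c u _ hu => rw [map_smul, map_smul, hu, smul_zero]
  -- left convolution with α
  have hconv : ∀ (h : R →ₗ[K] K) (i j : ℕ), j < n →
      conv K α h (g ^ i * x ^ j) = ξ ^ i * h (g ^ i * x ^ j) := by
    intro h i j hj
    have e0 : conv K α h (g ^ i * x ^ j)
        = LinearMap.mul' K K (TensorProduct.map α h
            (Coalgebra.comul (R := K) (g ^ i * x ^ j))) := rfl
    have e1 : Coalgebra.comul (R := K) (g ^ i * x ^ j)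
        = (g ^ i) ⊗ₜ[K] (g ^ i * x ^ j)
          + (Coalgebra.comul (R := K) (g ^ i * x ^ j) - (g ^ i) ⊗ₜ[K] (g ^ i * x ^ j)) := by
      abel
    rw [e0, e1, map_add, map_add, hαkill j hj h _ (hcomA j i), add_zero,
      TensorProduct.map_tmul, LinearMap.mul'_apply, hαg]
  -- convolution powers of α
  have hpow : ∀ p i j : ℕ, j < n →
      convPow K α p (g ^ i * x ^ j) = if j = 0 then ξ ^ (p * i) else 0 := by
    intro p
    induction p with
    | zero =>
      intro i j hj
      have : convPow K α 0 = Coalgebra.counit (R := K) (A := R) := rfl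
      rw [this, hε']
      simp
    | succ p ih =>
      intro i j hj
      have e : convPow K α (p + 1) = conv K α (convPow K α p) := rfl
      rw [e, hconv _ i j hj, ih i j hj]
      by_cases h : j = 0
      · rw [if_pos h, if_pos h, ← pow_add]
        congr 1
        ring
      · rw [if_neg h, if_neg h, mul_zero]
  -- the key computation on basis elements
  have key : ∀ (i k : Fin (m * n)) (j l : Fin n),
      β (B (i, j) * B (k, l)) = Coalgebra.counit (R := K) (B (i, j)) * β (B (k, l))
        + β (B (i, j)) * convPow K α m (B (k, l)) := by
    intro i k j l
    have hB1 : B (i, j) = g ^ (i : ℕ) * x ^ (j : ℕ) := hB (i, j)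
    have hB2 : B (k, l) = g ^ (k : ℕ) * x ^ (l : ℕ) := hB (k, l)
    rw [hB1, hB2, hprod, map_smul, smul_eq_mul, hε' (i : ℕ) (j : ℕ),
      hβ' (i : ℕ) (j : ℕ) j.isLt, hβ' (k : ℕ) (l : ℕ) l.isLt,
      hpow m (k : ℕ) (l : ℕ) l.isLt]
    have hqk : ξ ^ (m * (k : ℕ)) = q ^ (k : ℕ) := by rw [pow_mul, hξm]
    rw [hqk]
    have hjn : (j : ℕ) < n := j.isLt
    have hln : (l : ℕ) < n := l.isLt
    by_cases hlt : (j : ℕ) + (l : ℕ) < n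
    · rw [hβ' _ _ hlt]
      by_cases hj0 : (j : ℕ) = 0
      · rw [hj0]
        simp
      · by_cases hl0 : (l : ℕ) = 0
        · rw [hl0]
          by_cases hj1 : (j : ℕ) = 1
          · simp [hj0, hj1]
          · simp [hj0, hj1]
        · have h1 : (j : ℕ) + (l : ℕ) ≠ 1 := by omega
          simp [hj0, hl0, h1]
    · rw [hβ'' _ _ (by omega) (by omega)]
      have h1 : (j : ℕ) ≠ 0 := by omega
      have h2 : (l : ℕ) ≠ 0 := by omega
      simp [h1, h2]
  -- deduce the general statement by bilinearity
  intro a b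
  have hbilin : ((LinearMap.mul K R).compr₂ β)
      = (Coalgebra.counit (R := K) (A := R)).smulRight β + β.smulRight (convPow K α m) := by
    apply B.ext
    rintro ⟨i, j⟩
    apply B.ext
    rintro ⟨k, l⟩
    simp only [LinearMap.compr₂_apply, LinearMap.mul_apply', LinearMap.add_apply,
      LinearMap.smulRight_apply, LinearMap.smul_apply, smul_eq_mul]
    exact key i k j l
  have h2 := DFunLike.congr_fun (DFunLike.congr_fun hbilin a) b
  simpa only [LinearMap.compr₂_apply, LinearMap.mul_apply', LinearMap.add_apply,
    LinearMap.smulRight_apply, LinearMap.smul_apply, smul_eq_mul] using h2
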